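/- Let w : ℝᴺ → ℝᴺ be continuous and let x, y ∈ ℝᴺ. For every ε > 0 there exists δ > 0 such that for every continuous vector field u : ℝᴺ → ℝᴺ satisfying ‖u(z) − w(z)‖ ≤ δ for all z ∈ ℝᴺ, and for all points a, b ∈ ℝᴺ with ‖a − x‖ ≤ δ and ‖b − y‖ ≤ δ, one has Q_u(a, b) ≤ Q_w(x, y) + ε. (Joint upper semicontinuity of the Freidlin–Wentzell quasipotential in the vector field, with respect to the uniform distance, and in the endpoints.) -/

import Mathlib

open MeasureTheory Set

/-- A path `φ : [T₁,T₂] → ℝᴺ` is admissible with derivative `g` if `g` is measurable with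
square-integrable norm on `[T₁,T₂]` and `φ(t) = φ(T₁) + ∫_{T₁}^t g(s) ds` on `[T₁,T₂]`. -/
def IsAdmissiblePath (N : ℕ) (T₁ T₂ : ℝ)
    (φ g : ℝ → EuclideanSpace ℝ (Fin N)) : Prop :=
  Measurable g ∧
  MeasureTheory.IntegrableOn (fun t => ‖g t‖ ^ 2) (Set.Icc T₁ T₂) ∧
  ∀ t ∈ Set.Icc T₁ T₂, φ t = φ T₁ + ∫ s in T₁..t, g s

/-- The Freidlin–Wentzell quasipotential of a vector field `u` between `x` and `y`: the
infimum of the actions `(1/4)∫₀^T ‖g − u(φ)‖²` over all `T > 0` and all admissible paths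
`φ : [0,T] → ℝᴺ` from `x` to `y`. -/
noncomputable def quasipotential (N : ℕ)
    (u : EuclideanSpace ℝ (Fin N) → EuclideanSpace ℝ (Fin N))
    (x y : EuclideanSpace ℝ (Fin N)) : ℝ :=
  sInf {a : ℝ | ∃ T : ℝ, 0 < T ∧ ∃ φ g : ℝ → EuclideanSpace ℝ (Fin N),
    IsAdmissiblePath N 0 T φ g ∧ φ 0 = x ∧ φ T = y ∧
    a = (1 / 4) * ∫ t in Set.Icc 0 T, ‖g t - u (φ t)‖ ^ 2}

open Filter Topology

/-! Take an admissible path `(φ, g)` from `x` to `y` on `[0, T]` whose `w`-action is within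
`ε / 2` of `Q_w(x, y)`. Adding the affine correction `(1 - t/T)(a - x) + (t/T)(b - y)` gives a
path `ψ` from `a` to `b` whose velocity is `g + v` with `‖v‖ = O(δ / T)`. Since `w` is uniformly
continuous near the compact trace of `φ`, the integrand `‖g + v - u(ψ)‖` exceeds `‖g - w(φ)‖`
pointwise by at most an `η` that tends to `0` with `δ`, and `(r + η)² ≤ (1 + η) r² + η + η²`
turns this into a bound on the actions. -/

variable {N : ℕ}

theorem IsCompact.exists_pos_forall_norm_sub_le {E F : Type*} [NormedAddCommGroup E]
    [NormedAddCommGroup F] {K : Set E} (hK : IsCompact K) {w : E → F}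
    (hw : ∀ z ∈ K, ContinuousAt w z) {η : ℝ} (hη : 0 < η) :
    ∃ δ > 0, ∀ u : E → F, (∀ z, ‖u z - w z‖ ≤ δ) →
      ∀ z ∈ K, ∀ z', ‖z' - z‖ ≤ δ → ‖u z' - w z‖ ≤ η := by
  obtain ⟨δ, hδ, hwδ⟩ := Metric.mem_uniformity_dist.1
    (hK.uniformContinuousAt_of_continuousAt w hw (Metric.dist_mem_uniformity (half_pos hη)))
  refine ⟨min (δ / 2) (η / 2), by positivity, fun u huw z hz z' hz' => ?_⟩
  have hzz' : dist z z' < δ := by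
    rw [dist_comm, dist_eq_norm]
    linarith [min_le_left (δ / 2) (η / 2)]
  have hw' : ‖w z' - w z‖ < η / 2 := by
    rw [← dist_eq_norm, dist_comm]
    exact hwδ hzz' hz
  calc ‖u z' - w z‖ ≤ ‖u z' - w z'‖ + ‖w z' - w z‖ := norm_sub_le_norm_sub_add_norm_sub _ _ _
    _ ≤ η := by linarith [huw z', min_le_right (δ / 2) (η / 2)]

theorem setIntegral_norm_sq_le_of_norm_le_add {α E : Type*} [MeasurableSpace α]
    [NormedAddCommGroup E] {μ : Measure α} {s : Set α} (hs : MeasurableSet s) (hμs : μ s ≠ ⊤)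
    {f F : α → E} (hF : IntegrableOn (fun t => ‖F t‖ ^ 2) s μ) {η : ℝ} (hη : 0 ≤ η)
    (hfF : ∀ t ∈ s, ‖f t‖ ≤ ‖F t‖ + η) :
    ∫ t in s, ‖f t‖ ^ 2 ∂μ ≤ (1 + η) * ∫ t in s, ‖F t‖ ^ 2 ∂μ + (η + η ^ 2) * μ.real s := by
  have hpt : ∀ t ∈ s, ‖f t‖ ^ 2 ≤ (1 + η) * ‖F t‖ ^ 2 + (η + η ^ 2) := fun t ht => by
    nlinarith [pow_le_pow_left₀ (norm_nonneg (f t)) (hfF t ht) 2,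
      mul_nonneg hη (sq_nonneg (‖F t‖ - 1))]
  have hconst : IntegrableOn (fun _ => η + η ^ 2) s μ := integrableOn_const hμs
  calc ∫ t in s, ‖f t‖ ^ 2 ∂μ ≤ ∫ t in s, ((1 + η) * ‖F t‖ ^ 2 + (η + η ^ 2)) ∂μ :=
        integral_mono_of_nonneg (ae_of_all _ fun t => by positivity)
          ((hF.const_mul _).add hconst) ((ae_restrict_iff' hs).2 (ae_of_all _ hpt))
    _ = (1 + η) * ∫ t in s, ‖F t‖ ^ 2 ∂μ + (η + η ^ 2) * μ.real s := by
        rw [integral_add (hF.const_mul _) hconst, integral_const_mul, setIntegral_const,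
          smul_eq_mul, mul_comm (μ.real s)]

theorem isAdmissiblePath_const (T₁ T₂ : ℝ) (x : EuclideanSpace ℝ (Fin N)) :
    IsAdmissiblePath N T₁ T₂ (fun _ => x) 0 :=
  ⟨measurable_const, by simp, by simp⟩

namespace IsAdmissiblePath

variable {T₁ T₂ : ℝ} {φ g : ℝ → EuclideanSpace ℝ (Fin N)}

theorem memLp_two (h : IsAdmissiblePath N T₁ T₂ φ g) :
    MemLp g 2 (volume.restrict (Icc T₁ T₂)) :=
  (memLp_two_iff_integrable_sq_norm h.1.aestronglyMeasurable).2 h.2.1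

theorem integrableOn (h : IsAdmissiblePath N T₁ T₂ φ g) : IntegrableOn g (Icc T₁ T₂) :=
  h.memLp_two.integrable one_le_two

theorem continuousOn (h : IsAdmissiblePath N T₁ T₂ φ g) : ContinuousOn φ (Icc T₁ T₂) := by
  refine ((continuousOn_const (c := φ T₁)).add
    (intervalIntegral.continuousOn_primitive h.integrableOn)).congr fun t ht => ?_
  rw [h.2.2 t ht, intervalIntegral.integral_of_le ht.1, Pi.add_apply]

theorem add_affine (h : IsAdmissiblePath N T₁ T₂ φ g) (p v : EuclideanSpace ℝ (Fin N)) :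
    IsAdmissiblePath N T₁ T₂ (fun t => φ t + p + t • v) (fun t => g t + v) := by
  refine ⟨h.1.add_const v, ?_, fun t ht => ?_⟩
  · have hv := h.memLp_two.add (memLp_const v)
    exact (memLp_two_iff_integrable_sq_norm hv.1).1 hv
  · have hg : IntervalIntegrable g volume T₁ t :=
      (intervalIntegrable_iff_integrableOn_Icc_of_le ht.1).2
        (h.integrableOn.mono_set (Icc_subset_Icc_right ht.2))
    beta_reduce
    rw [intervalIntegral.integral_add hg intervalIntegrable_const, intervalIntegral.integral_const,
      h.2.2 t ht, sub_smul]
    abel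

theorem integrableOn_norm_sub_comp_sq (h : IsAdmissiblePath N T₁ T₂ φ g)
    {u : EuclideanSpace ℝ (Fin N) → EuclideanSpace ℝ (Fin N)} (hu : Continuous u) :
    IntegrableOn (fun t => ‖g t - u (φ t)‖ ^ 2) (Icc T₁ T₂) := by
  have huφ : ContinuousOn (fun t => u (φ t)) (Icc T₁ T₂) := hu.comp_continuousOn h.continuousOn
  have huφ2 : MemLp (fun t => u (φ t)) 2 (volume.restrict (Icc T₁ T₂)) :=
    (memLp_two_iff_integrable_sq_norm (huφ.aestronglyMeasurable measurableSet_Icc)).2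
      ((huφ.norm.pow 2).integrableOn_compact isCompact_Icc)
  have hsub := h.memLp_two.sub huφ2
  exact (memLp_two_iff_integrable_sq_norm hsub.1).1 hsub

theorem shift_endpoints {T : ℝ} (hT : 0 < T) (h : IsAdmissiblePath N 0 T φ g)
    (p q : EuclideanSpace ℝ (Fin N)) :
    ∃ ψ, IsAdmissiblePath N 0 T ψ (fun t => g t + T⁻¹ • (q - p)) ∧ ψ 0 = φ 0 + p ∧
      ψ T = φ T + q ∧ ∀ t ∈ Icc 0 T, ‖ψ t - φ t‖ ≤ ‖p‖ + ‖q‖ := by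
  refine ⟨_, h.add_affine p (T⁻¹ • (q - p)), by simp, ?_, fun t ht => ?_⟩
  · simp only [smul_smul, mul_inv_cancel₀ hT.ne', one_smul]
    abel
  · have hs₀ : 0 ≤ t / T := div_nonneg ht.1 hT.le
    have hs₁ : t / T ≤ 1 := (div_le_one hT).2 ht.2
    have hconvex : φ t + p + t • T⁻¹ • (q - p) - φ t = (1 - t / T) • p + (t / T) • q := by
      rw [smul_smul, ← div_eq_mul_inv]
      module
    calc ‖φ t + p + t • T⁻¹ • (q - p) - φ t‖ ≤ (1 - t / T) * ‖p‖ + t / T * ‖q‖ := by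
          rw [hconvex]
          refine (norm_add_le _ _).trans_eq ?_
          rw [norm_smul_of_nonneg (by linarith), norm_smul_of_nonneg hs₀]
      _ ≤ ‖p‖ + ‖q‖ := by nlinarith [norm_nonneg p, norm_nonneg q]

end IsAdmissiblePath

theorem quasipotential_le_action {u : EuclideanSpace ℝ (Fin N) → EuclideanSpace ℝ (Fin N)}
    {T : ℝ} (hT : 0 < T) {φ g : ℝ → EuclideanSpace ℝ (Fin N)} (h : IsAdmissiblePath N 0 T φ g) :
    quasipotential N u (φ 0) (φ T) ≤ (1 / 4) * ∫ t in Icc 0 T, ‖g t - u (φ t)‖ ^ 2 :=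
  csInf_le ⟨0, by rintro _ ⟨T, -, φ, g, -, -, -, rfl⟩; positivity⟩ ⟨T, hT, φ, g, h, rfl, rfl, rfl⟩

theorem exists_action_lt_quasipotential_add
    (u : EuclideanSpace ℝ (Fin N) → EuclideanSpace ℝ (Fin N)) (x y : EuclideanSpace ℝ (Fin N))
    {ε : ℝ} (hε : 0 < ε) :
    ∃ T > 0, ∃ φ g : ℝ → EuclideanSpace ℝ (Fin N), IsAdmissiblePath N 0 T φ g ∧ φ 0 = x ∧
      φ T = y ∧ (1 / 4) * ∫ t in Icc 0 T, ‖g t - u (φ t)‖ ^ 2 < quasipotential N u x y + ε := by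
  have hQ := lt_add_of_pos_right (quasipotential N u x y) hε
  unfold quasipotential at hQ
  obtain ⟨_, ⟨T, hT, φ, g, h, h0, hT', rfl⟩, hlt⟩ := exists_lt_of_csInf_lt
    (by exact ⟨_, 1, one_pos, _, _, (isAdmissiblePath_const 0 1 x).add_affine 0 (y - x), by simp,
      by simp, rfl⟩) hQ
  exact ⟨T, hT, φ, g, h, h0, hT', hlt⟩

theorem quasipotential_upper_semicontinuous_general (N : ℕ)
    (w : EuclideanSpace ℝ (Fin N) → EuclideanSpace ℝ (Fin N)) (hw : Continuous w)
    (x y : EuclideanSpace ℝ (Fin N)) :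
    ∀ ε > 0, ∃ δ > 0,
      ∀ u : EuclideanSpace ℝ (Fin N) → EuclideanSpace ℝ (Fin N), Continuous u →
        (∀ z, ‖u z - w z‖ ≤ δ) →
        ∀ a b : EuclideanSpace ℝ (Fin N), ‖a - x‖ ≤ δ → ‖b - y‖ ≤ δ →
          quasipotential N u a b ≤ quasipotential N w x y + ε := by
  intro ε hε
  obtain ⟨T, hT, φ, g, hφ, rfl, rfl, hlt⟩ := exists_action_lt_quasipotential_add w x y (half_pos hε)
  set I := ∫ t in Icc 0 T, ‖g t - w (φ t)‖ ^ 2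
  have hlim : Tendsto (fun η : ℝ => (η + η ^ 2) * T + η * I) (𝓝[>] 0) (𝓝 0) := by
    have hcont : Continuous fun η : ℝ => (η + η ^ 2) * T + η * I := by fun_prop
    simpa using (hcont.tendsto 0).mono_left nhdsWithin_le_nhds
  obtain ⟨η, hηI, hη⟩ :=
    ((hlim.eventually (gt_mem_nhds (by linarith : (0 : ℝ) < 2 * ε))).and self_mem_nhdsWithin).exists
  obtain ⟨δ, hδ, hclose⟩ := (isCompact_Icc.image_of_continuousOn hφ.continuousOn)
    |>.exists_pos_forall_norm_sub_le (fun z _ => hw.continuousAt) (half_pos hη)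
  refine ⟨min (δ / 2) (η * T / 4), by positivity, fun u _ huw a b ha hb => ?_⟩
  have hδ₁ := min_le_left (δ / 2) (η * T / 4)
  have hδ₂ := min_le_right (δ / 2) (η * T / 4)
  obtain ⟨ψ, hψ, hψ0, hψT, hψφ⟩ := hφ.shift_endpoints hT (a - φ 0) (b - φ T)
  rw [add_sub_cancel] at hψ0 hψT
  set v := T⁻¹ • ((b - φ T) - (a - φ 0))
  have hv : ‖v‖ ≤ η / 2 := by
    rw [norm_smul, norm_inv, Real.norm_of_nonneg hT.le, inv_mul_le_iff₀ hT]
    linarith [norm_sub_le (b - φ T) (a - φ 0)]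
  have hpt : ∀ t ∈ Icc 0 T, ‖g t + v - u (ψ t)‖ ≤ ‖g t - w (φ t)‖ + η := fun t ht => by
    have hu := hclose u (fun z => (huw z).trans (by linarith)) (φ t) (mem_image_of_mem φ ht) (ψ t)
      (by linarith [hψφ t ht])
    calc ‖g t + v - u (ψ t)‖ = ‖(g t - w (φ t)) + v - (u (ψ t) - w (φ t))‖ := by
          congr 1; abel
      _ ≤ ‖g t - w (φ t)‖ + ‖v‖ + ‖u (ψ t) - w (φ t)‖ :=
          (norm_sub_le _ _).trans (by gcongr; exact norm_add_le _ _)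
      _ ≤ ‖g t - w (φ t)‖ + η := by linarith
  have hint := setIntegral_norm_sq_le_of_norm_le_add measurableSet_Icc measure_Icc_lt_top.ne
    (hφ.integrableOn_norm_sub_comp_sq hw) hη.le hpt
  rw [Real.volume_real_Icc_of_le hT.le, sub_zero] at hint
  calc quasipotential N u a b ≤ _ := hψ0 ▸ hψT ▸ quasipotential_le_action hT hψ
    _ ≤ quasipotential N w (φ 0) (φ T) + ε := by linarith

/-- Joint upper semicontinuity of the Freidlin–Wentzell quasipotential in
the vector field (uniform distance) and in the endpoints. -/
theorem quasipotential_upper_semicontinuous (N : ℕ) (hN : 1 ≤ N)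
    (w : EuclideanSpace ℝ (Fin N) → EuclideanSpace ℝ (Fin N)) (hw : Continuous w)
    (x y : EuclideanSpace ℝ (Fin N)) :
    ∀ ε > 0, ∃ δ > 0,
      ∀ u : EuclideanSpace ℝ (Fin N) → EuclideanSpace ℝ (Fin N), Continuous u →
        (∀ z, ‖u z - w z‖ ≤ δ) →
        ∀ a b : EuclideanSpace ℝ (Fin N), ‖a - x‖ ≤ δ → ‖b - y‖ ≤ δ →
          quasipotential N u a b ≤ quasipotential N w x y + ε :=
  quasipotential_upper_semicontinuous_general N w hw x y
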